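/- Uniqueness of walks from color sequences: let G be a directed multigraph whose edges are colored by a set I and which satisfies the following three conditions: (i) no vertex has two distinct incoming edges of the same color, and no vertex has two distinct outgoing edges of the same color; (ii) for every color i ∈ I there are at most two edges of color i; (iii) whenever a and b are distinct vertices that each have an incoming edge of some common color i, there is no color j such that both a and b have an outgoing edge of color j, and dually, whenever a and b are distinct vertices that each have an outgoing edge of some common color i, there is no color j such that both a and b have an incoming edge of color j. Then for every k ≥ 2, any sequence (c_0, c_1, …, c_{k−1}) of colors is the color sequence of at most one directed walk of length k in G; in particular, if some directed walk in G has this color sequence, that walk is unique. (These three conditions hold for the Kirillov–Reshetikhin crystal graphs B^{1,1} of all classical affine types, so a path of length k ≥ 2 in B^{1,1} determines a unique walk.) -/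

import Mathlib

/-!
Two walks with the same colors agree edge by edge, except possibly at the last step. If they
differed at step `t < k - 1`, their `t`-th edges would share a color but, by (i), end at distinct
vertices; those vertices both emit an edge of the color of step `t + 1`, contradicting (iii).
The last edges then share a color and a source (the common target of the previous edge), so they
agree by (i).
-/

structure ColoredDigraph (V E I : Type*) where
  src : E → V
  tgt : E → V
  color : E → I

namespace ColoredDigraph

/-- `e 0, e 1, …, e (k-1)` is a directed walk of length `k`:
consecutive edges are composable. -/
def IsWalk {V E I : Type*} (G : ColoredDigraph V E I) (k : ℕ) (e : ℕ → E) : Prop :=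
  ∀ t : ℕ, t + 1 < k → G.tgt (e t) = G.src (e (t + 1))

section

variable {V E I : Type*} {G : ColoredDigraph V E I}

theorem IsWalk.src_eq_tgt_pred {k : ℕ} {e : ℕ → E} (hw : G.IsWalk k e) {t : ℕ}
    (ht₀ : 0 < t) (ht : t < k) : G.src (e t) = G.tgt (e (t - 1)) := by
  obtain ⟨s, rfl⟩ := Nat.exists_eq_add_one_of_ne_zero ht₀.ne'
  exact (hw s ht).symm

theorem eq_of_color_eq_of_succ_color_eq
    (h_in : ∀ e e' : E, G.color e = G.color e' → G.tgt e = G.tgt e' → e = e')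
    (h_sep : ∀ a b : V, a ≠ b →
      (∃ i : I, (∃ e, G.tgt e = a ∧ G.color e = i) ∧ (∃ e, G.tgt e = b ∧ G.color e = i)) →
      ¬ ∃ j : I, (∃ f, G.src f = a ∧ G.color f = j) ∧ (∃ f, G.src f = b ∧ G.color f = j))
    {e e' f f' : E} (he : G.color e = G.color e') (hf : G.color f = G.color f')
    (hef : G.tgt e = G.src f) (hef' : G.tgt e' = G.src f') : e = e' := by
  by_contra hne
  have htgt : G.tgt e ≠ G.tgt e' := fun h ↦ hne (h_in e e' he h)
  exact h_sep _ _ htgt ⟨_, ⟨e, rfl, rfl⟩, ⟨e', rfl, he.symm⟩⟩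
    ⟨_, ⟨f, hef.symm, rfl⟩, ⟨f', hef'.symm, hf.symm⟩⟩

end

theorem walk_unique_from_colors_general {V E I : Type*} (G : ColoredDigraph V E I)
    (h_in : ∀ e e' : E, G.color e = G.color e' → G.tgt e = G.tgt e' → e = e')
    (h_out : ∀ e e' : E, G.color e = G.color e' → G.src e = G.src e' → e = e')
    (h_sep : ∀ a b : V, a ≠ b →
      (∃ i : I, (∃ e, G.tgt e = a ∧ G.color e = i) ∧ (∃ e, G.tgt e = b ∧ G.color e = i)) →
      ¬ ∃ j : I, (∃ f, G.src f = a ∧ G.color f = j) ∧ (∃ f, G.src f = b ∧ G.color f = j))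
    (k : ℕ) (hk : 2 ≤ k) (e₁ e₂ : ℕ → E)
    (hw₁ : G.IsWalk k e₁) (hw₂ : G.IsWalk k e₂)
    (hc : ∀ t : ℕ, t < k → G.color (e₁ t) = G.color (e₂ t)) :
    ∀ t : ℕ, t < k → e₁ t = e₂ t := by
  have h_init : ∀ t, t + 1 < k → e₁ t = e₂ t := fun t ht ↦
    eq_of_color_eq_of_succ_color_eq h_in h_sep (hc t (by omega)) (hc (t + 1) ht)
      (hw₁ t ht) (hw₂ t ht)
  intro t ht
  obtain ht' | rfl : t + 1 < k ∨ t = k - 1 := by omega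
  · exact h_init t ht'
  · refine h_out _ _ (hc _ ht) ?_
    rw [hw₁.src_eq_tgt_pred (by omega) ht, hw₂.src_eq_tgt_pred (by omega) ht,
      h_init _ (by omega)]

/-- Uniqueness of walks from color sequences.  If a colored
directed multigraph satisfies (i) no vertex has two distinct incoming (resp.
outgoing) edges of the same color, (ii) each color has at most two edges, and
(iii) distinct vertices with incoming edges of a common color have no common
color among their outgoing edges (and dually), then for `k ≥ 2` a sequence of
colors is the color sequence of at most one directed walk of length `k`. -/
theorem walk_unique_from_colors {V E I : Type*} (G : ColoredDigraph V E I)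
    (h_in : ∀ e e' : E, G.color e = G.color e' → G.tgt e = G.tgt e' → e = e')
    (h_out : ∀ e e' : E, G.color e = G.color e' → G.src e = G.src e' → e = e')
    (h_two : ∀ (i : I) (e₁ e₂ e₃ : E),
      G.color e₁ = i → G.color e₂ = i → G.color e₃ = i →
      e₁ = e₂ ∨ e₁ = e₃ ∨ e₂ = e₃)
    (h_sep : ∀ a b : V, a ≠ b →
      (∃ i : I, (∃ e, G.tgt e = a ∧ G.color e = i) ∧ (∃ e, G.tgt e = b ∧ G.color e = i)) →
      ¬ ∃ j : I, (∃ f, G.src f = a ∧ G.color f = j) ∧ (∃ f, G.src f = b ∧ G.color f = j))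
    (h_sep' : ∀ a b : V, a ≠ b →
      (∃ i : I, (∃ e, G.src e = a ∧ G.color e = i) ∧ (∃ e, G.src e = b ∧ G.color e = i)) →
      ¬ ∃ j : I, (∃ f, G.tgt f = a ∧ G.color f = j) ∧ (∃ f, G.tgt f = b ∧ G.color f = j))
    (k : ℕ) (hk : 2 ≤ k) (e₁ e₂ : ℕ → E)
    (hw₁ : G.IsWalk k e₁) (hw₂ : G.IsWalk k e₂)
    (hc : ∀ t : ℕ, t < k → G.color (e₁ t) = G.color (e₂ t)) :
    ∀ t : ℕ, t < k → e₁ t = e₂ t :=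
  walk_unique_from_colors_general G h_in h_out h_sep k hk e₁ e₂ hw₁ hw₂ hc

end ColoredDigraph
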